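/- Let a, b be real numbers with 0 < a < 1 and let s = a + ib. If ζ(s) = 0, then (a−1)/((a−1)² + b²) = ∫₁^∞ {x} · cos(b·ln(x)) / x^{1+a} dx. -/

import Mathlib

/-!
For real `s > 1`, cutting `∫₁^∞ {x} x^(-s-1) dx` at the integers and summing gives
`ζ(s) = s/(s-1) - s ∫₁^∞ {x} x^(-s-1) dx` (`ZetaAsymptotics.termTSum_of_lt`). The integral is
the Mellin transform at `-s` of a bounded function vanishing on `(0, 1)`, hence holomorphic on
`Re s > 0`; by the identity theorem the entire function `(s-1) ζ(s)` equals
`s - s(s-1) ∫₁^∞ {x} x^(-s-1) dx` on the whole half-plane. At a zero `s` (which is neither `0`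
nor `1`) this gives `∫₁^∞ {x} x^(-s-1) dx = 1/(s-1)`, whose real part is the claim.
-/

open MeasureTheory Set Filter Topology Asymptotics

theorem Complex.re_ofReal_cpow {x : ℝ} (hx : 0 < x) (w : ℂ) :
    ((x : ℂ) ^ w).re = x ^ w.re * Real.cos (w.im * Real.log x) := by
  rw [Complex.cpow_def_of_ne_zero (Complex.ofReal_ne_zero.mpr hx.ne'), ← Complex.ofReal_log hx.le,
    Complex.exp_re, Real.rpow_def_of_pos hx]
  simp only [Complex.mul_re, Complex.mul_im, Complex.ofReal_re, Complex.ofReal_im]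
  ring_nf

theorem iUnion_Ioc_natCast_add (a : ℝ) : ⋃ n : ℕ, Ioc (n + a) (n + a + 1) = Ioi a := by
  ext x
  simp only [mem_iUnion, mem_Ioc, mem_Ioi]
  constructor
  · rintro ⟨n, hn, -⟩
    linarith [n.cast_nonneg (α := ℝ)]
  · intro hx
    have hceil : 1 ≤ ⌈x - a⌉₊ := Nat.one_le_iff_ne_zero.mpr (by simpa using hx)
    refine ⟨⌈x - a⌉₊ - 1, ?_, ?_⟩
    · rw [Nat.cast_sub hceil]
      linarith [Nat.ceil_lt_add_one (sub_nonneg.mpr hx.le), (Nat.cast_one (R := ℝ))]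
    · rw [Nat.cast_sub hceil]
      linarith [Nat.le_ceil (x - a), (Nat.cast_one (R := ℝ))]

theorem pairwise_disjoint_Ioc_natCast_add (a : ℝ) :
    Pairwise (Function.onFun Disjoint fun n : ℕ => Ioc (n + a) (n + a + 1)) := by
  intro m n hmn
  simpa [add_comm a] using
    (pairwise_disjoint_Ioc_add_intCast a) ((Nat.cast_injective (R := ℤ)).ne hmn)

theorem hasSum_intervalIntegral_of_integrableOn_Ioi {E : Type*} [NormedAddCommGroup E]
    [NormedSpace ℝ E] {f : ℝ → E} {a : ℝ} (hf : IntegrableOn f (Ioi a)) :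
    HasSum (fun n : ℕ => ∫ x in n + a..n + a + 1, f x) (∫ x in Ioi a, f x) := by
  simp_rw [intervalIntegral.integral_of_le (le_add_of_nonneg_right zero_le_one)]
  rw [← iUnion_Ioc_natCast_add a] at hf ⊢
  exact hasSum_integral_iUnion (fun _ => measurableSet_Ioc) (pairwise_disjoint_Ioc_natCast_add a) hf

noncomputable def tailTransform (f : ℝ → ℝ) (s : ℂ) : ℂ :=
  ∫ x in Ioi 1, (f x : ℂ) * (x : ℂ) ^ (-s - 1)

section TailTransform

variable {f : ℝ → ℝ} {C : ℝ}

theorem integrableOn_Ioi_one_mul_rpow (hf : Measurable f) (hC : ∀ x, |f x| ≤ C) {σ : ℝ}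
    (hσ : 0 < σ) : IntegrableOn (fun x => f x * x ^ (-σ - 1)) (Ioi 1) := by
  have hpow : IntegrableOn (fun x : ℝ => x ^ (-σ - 1)) (Ioi 1) :=
    integrableOn_Ioi_rpow_of_lt (by linarith) zero_lt_one
  refine Integrable.mono' (hpow.const_mul C)
    ((hf.mul (measurable_id.pow_const _)).aestronglyMeasurable) ?_
  filter_upwards [ae_restrict_mem measurableSet_Ioi] with x hx
  have hpow_nonneg : 0 ≤ x ^ (-σ - 1) := Real.rpow_nonneg (zero_le_one.trans hx.le) _
  rw [norm_mul, Real.norm_eq_abs, Real.norm_of_nonneg hpow_nonneg]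
  exact mul_le_mul_of_nonneg_right (hC x) hpow_nonneg

theorem norm_ofReal_mul_cpow_neg_sub_one {x : ℝ} (hx : 0 < x) (y : ℝ) (s : ℂ) :
    ‖(y : ℂ) * (x : ℂ) ^ (-s - 1)‖ = |y| * x ^ (-s.re - 1) := by
  rw [norm_mul, Complex.norm_real, Real.norm_eq_abs, Complex.norm_cpow_eq_rpow_re_of_pos hx]
  simp

theorem integrableOn_tailTransform (hf : Measurable f) (hC : ∀ x, |f x| ≤ C) {s : ℂ}
    (hs : 0 < s.re) : IntegrableOn (fun x : ℝ => (f x : ℂ) * (x : ℂ) ^ (-s - 1)) (Ioi 1) := by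
  refine Integrable.mono' (integrableOn_Ioi_one_mul_rpow (f := fun x => |f x|)
    (continuous_abs.measurable.comp hf) (fun x => by simpa using hC x) hs) ?_ ?_
  · exact ((Complex.measurable_ofReal.comp hf).mul
      (Complex.measurable_ofReal.pow_const _)).aestronglyMeasurable
  · filter_upwards [ae_restrict_mem measurableSet_Ioi] with x hx
    exact (norm_ofReal_mul_cpow_neg_sub_one (zero_lt_one.trans hx) _ _).le

theorem tailTransform_eq_mellin (s : ℂ) :
    tailTransform f s = mellin ((Ioi 1).indicator fun x => (f x : ℂ)) (-s) := by
  have hindicator : ∀ x : ℝ,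
      (x : ℂ) ^ (-s - 1) • (Ioi 1).indicator (fun x => (f x : ℂ)) x =
        (Ioi 1).indicator (fun x => (f x : ℂ) * (x : ℂ) ^ (-s - 1)) x := by
    intro x
    by_cases hx : x ∈ Ioi 1 <;> simp [hx, mul_comm]
  rw [tailTransform, mellin]
  simp_rw [hindicator]
  rw [setIntegral_indicator measurableSet_Ioi, Ioi_inter_Ioi, max_eq_right zero_le_one]

theorem differentiableAt_tailTransform (hf : Measurable f) (hC : ∀ x, |f x| ≤ C) {s : ℂ}
    (hs : 0 < s.re) : DifferentiableAt ℂ (tailTransform f) s := by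
  set g := (Ioi (1 : ℝ)).indicator fun x => (f x : ℂ)
  have hg : ∀ x, ‖g x‖ ≤ C := fun x =>
    (norm_indicator_le_norm_self _ x).trans (by simpa using hC x)
  have hg_meas : Measurable g := (Complex.measurable_ofReal.comp hf).indicator measurableSet_Ioi
  have hg_zero : g =ᶠ[𝓝[>] 0] 0 := by
    filter_upwards [Ioo_mem_nhdsGT zero_lt_one] with x hx
    exact indicator_of_notMem (not_lt.mpr hx.2.le) _
  have hmellin : DifferentiableAt ℂ (mellin g) (-s) := by
    refine mellin_differentiableAt_of_isBigO_rpow (a := 0) (b := -s.re - 1) ?_ ?_ ?_ ?_ ?_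
    · exact (locallyIntegrableOn_const C).mono hg_meas.aestronglyMeasurable
        (ae_of_all _ fun x => (hg x).trans (le_abs_self C))
    · exact isBigO_of_le' (c := C) _ fun x => by simpa using hg x
    · simpa using hs
    · exact (isBigO_zero _ _).congr' hg_zero.symm EventuallyEq.rfl
    · simp
  rw [show tailTransform f = fun s => mellin g (-s) from funext tailTransform_eq_mellin]
  exact hmellin.comp s differentiableAt_id.neg

theorem re_tailTransform (hf : Measurable f) (hC : ∀ x, |f x| ≤ C) {s : ℂ} (hs : 0 < s.re) :
    (tailTransform f s).re =
      ∫ x in Ioi 1, f x * Real.cos (s.im * Real.log x) / x ^ (1 + s.re) := by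
  rw [tailTransform, ← RCLike.re_eq_complex_re,
    ← integral_re (integrableOn_tailTransform hf hC hs)]
  refine setIntegral_congr_fun measurableSet_Ioi fun x hx => ?_
  have hx0 : 0 < x := zero_lt_one.trans hx
  rw [RCLike.re_eq_complex_re, Complex.re_ofReal_mul, Complex.re_ofReal_cpow hx0]
  simp only [Complex.sub_re, Complex.neg_re, Complex.one_re, Complex.sub_im, Complex.neg_im,
    Complex.one_im, sub_zero, neg_mul, Real.cos_neg]
  rw [show -s.re - 1 = -(1 + s.re) by ring, Real.rpow_neg hx0.le]
  ring

theorem tailTransform_ofReal (s : ℝ) :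
    tailTransform f s = ((∫ x in Ioi 1, f x * x ^ (-s - 1) : ℝ) : ℂ) := by
  refine Eq.trans ?_ (integral_ofReal (𝕜 := ℂ))
  refine setIntegral_congr_fun measurableSet_Ioi fun x hx => ?_
  change _ = ((f x * x ^ (-s - 1) : ℝ) : ℂ)
  rw [Complex.ofReal_mul, Complex.ofReal_cpow (zero_le_one.trans (le_of_lt hx))]
  push_cast
  rfl

end TailTransform

theorem abs_fract_le_one (x : ℝ) : |Int.fract x| ≤ 1 :=
  Int.abs_fract.trans_le (Int.fract_lt_one x).le

theorem intervalIntegral_fract_mul_rpow (n : ℕ) (s : ℝ) :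
    ∫ x in n + 1..n + 1 + 1, Int.fract x * x ^ (-s - 1) = ZetaAsymptotics.term (n + 1) s := by
  rw [ZetaAsymptotics.term, Nat.cast_succ, intervalIntegral.integral_of_le (by linarith),
    intervalIntegral.integral_of_le (by linarith), integral_Ioc_eq_integral_Ioo,
    integral_Ioc_eq_integral_Ioo]
  refine setIntegral_congr_fun measurableSet_Ioo fun x hx => ?_
  have hx0 : 0 < x := lt_of_le_of_lt (by positivity) hx.1
  have hfract : Int.fract x = x - (n + 1) :=
    Int.fract_eq_iff.mpr ⟨by linarith [hx.1], by linarith [hx.2], n + 1, by push_cast; ring⟩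
  rw [hfract, show -s - 1 = -(s + 1) by ring, Real.rpow_neg hx0.le, div_eq_mul_inv]

theorem integral_Ioi_one_fract_mul_rpow {s : ℝ} (hs : 0 < s) :
    ∫ x in Ioi 1, Int.fract x * x ^ (-s - 1) = ZetaAsymptotics.termTSum s := by
  have hint := integrableOn_Ioi_one_mul_rpow measurable_fract abs_fract_le_one hs
  rw [← (hasSum_intervalIntegral_of_integrableOn_Ioi hint).tsum_eq, ZetaAsymptotics.termTSum]
  exact tsum_congr fun n => intervalIntegral_fract_mul_rpow n s

theorem riemannZeta_ofReal_eq_sub_mul_tailTransform {s : ℝ} (hs : 1 < s) :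
    riemannZeta s = s / (s - 1) - s * tailTransform Int.fract s := by
  have hsum := ZetaAsymptotics.zeta_limit_aux1 hs
  rw [tailTransform_ofReal, integral_Ioi_one_fract_mul_rpow (zero_lt_one.trans hs),
    zeta_eq_tsum_one_div_nat_add_one_cpow (by simpa using hs)]
  have hcast : ∑' n : ℕ, 1 / ((n : ℂ) + 1) ^ (s : ℂ) =
      ((∑' n : ℕ, 1 / (n + 1 : ℝ) ^ s : ℝ) : ℂ) := by
    rw [Complex.ofReal_tsum]
    congr 1 with n
    rw [Complex.ofReal_div, Complex.ofReal_cpow (by positivity)]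
    push_cast
    rfl
  have hs1 : (s : ℂ) - 1 ≠ 0 := by exact_mod_cast (sub_pos.mpr hs).ne'
  rw [hcast, eq_add_of_sub_eq hsum]
  push_cast
  field_simp
  ring

theorem riemannZeta₁_eq_tailTransform {s : ℂ} (hs : 0 < s.re) :
    riemannZeta₁ s = s - s * (s - 1) * tailTransform Int.fract s := by
  let H : Set ℂ := {s | 0 < s.re}
  have hH : IsOpen H := isOpen_lt continuous_const Complex.continuous_re
  have hζ₁ : AnalyticOnNhd ℂ riemannZeta₁ H :=
    differentiable_riemannZeta₁.differentiableOn.analyticOnNhd hH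
  have hG : AnalyticOnNhd ℂ (fun s => s - s * (s - 1) * tailTransform Int.fract s) H := by
    refine DifferentiableOn.analyticOnNhd (fun s hs => ?_) hH
    have := differentiableAt_tailTransform measurable_fract abs_fract_le_one hs
    exact DifferentiableAt.differentiableWithinAt (by fun_prop)
  have hreal : ∀ x : ℝ, 1 < x →
      riemannZeta₁ x = x - x * (x - 1) * tailTransform Int.fract x := by
    intro x hx
    have hx1 : (x : ℂ) - 1 ≠ 0 := by exact_mod_cast (sub_pos.mpr hx).ne'
    rw [← mul_inv_cancel_left₀ hx1 (riemannZeta₁ x), ← riemannZeta_eq_inv_sub_mul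
      (sub_ne_zero.mp hx1), riemannZeta_ofReal_eq_sub_mul_tailTransform hx]
    field_simp
  have hofReal : Tendsto ((↑) : ℝ → ℂ) (𝓝[≠] 2) (𝓝[≠] ((2 : ℝ) : ℂ)) :=
    Complex.continuous_ofReal.continuousWithinAt.tendsto_nhdsWithin
      fun _ hx => Complex.ofReal_injective.ne hx
  refine hζ₁.eqOn_of_preconnected_of_frequently_eq hG (convex_halfSpace_re_gt 0).isPreconnected
    (by simp [H]) (hofReal.frequently ?_) hs
  exact ((eventually_gt_nhds one_lt_two).filter_mono nhdsWithin_le_nhds).frequently.mono hreal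

theorem tailTransform_fract_eq_inv_of_riemannZeta_eq_zero {s : ℂ} (hs : 0 < s.re)
    (hz : riemannZeta s = 0) : tailTransform Int.fract s = (s - 1)⁻¹ := by
  have hs1 : s - 1 ≠ 0 := sub_ne_zero.mpr fun h => riemannZeta_one_ne_zero (h ▸ hz)
  have hs0 : s ≠ 0 := fun h => by simp [h] at hs
  have hζ₁ : riemannZeta₁ s = 0 := by
    simpa [riemannZeta_eq_inv_sub_mul (sub_ne_zero.mp hs1), hs1] using hz
  rw [riemannZeta₁_eq_tailTransform hs] at hζ₁
  exact eq_inv_of_mul_eq_one_left (mul_left_cancel₀ hs0 (by linear_combination -hζ₁))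

theorem re_part_eq_one_general (a b : ℝ) (h0 : 0 < a)
    (hz : riemannZeta (a + b * Complex.I) = 0) :
    (a - 1) / ((a - 1) ^ 2 + b ^ 2) =
      ∫ x : ℝ in Set.Ioi (1 : ℝ), Int.fract x * Real.cos (b * Real.log x) / x ^ (1 + a) := by
  have hs : 0 < (a + b * Complex.I).re := by simpa using h0
  have hre := re_tailTransform measurable_fract abs_fract_le_one hs
  rw [tailTransform_fract_eq_inv_of_riemannZeta_eq_zero hs hz] at hre
  simpa [Complex.inv_re, Complex.normSq_apply, sq] using hre

theorem re_part_eq_one (a b : ℝ) (h0 : 0 < a) (h1 : a < 1)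
    (hz : riemannZeta (a + b * Complex.I) = 0) :
    (a - 1) / ((a - 1) ^ 2 + b ^ 2) =
      ∫ x : ℝ in Set.Ioi (1 : ℝ), Int.fract x * Real.cos (b * Real.log x) / x ^ (1 + a) :=
  re_part_eq_one_general a b h0 hz
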